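/- Let n ≥ 4 be odd. The sequence f(K₁) consisting of (n+1)/2 letters U, followed by an alternating block of length n starting with U and ending with U (UOU…OU), followed by (n−1)/2 letters O, satisfies: |Φ(f(K₁))| = (n−1)/2 if n ≡ 1 (mod 4), and |Φ(f(K₁))| = (n+1)/2 if n ≡ 3 (mod 4). The sequence f(K₂) consisting of (n−1)/2 letters U, followed by an alternating block of length n starting with O and ending with O (OUO…UO), followed by (n+1)/2 letters O, satisfies the same formulas: |Φ(f(K₂))| = (n−1)/2 if n ≡ 1 (mod 4), and |Φ(f(K₂))| = (n+1)/2 if n ≡ 3 (mod 4). -/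
import Mathlib


/-- The two-letter alphabet {O, U}. -/
inductive OULetter : Type
  | O : OULetter
  | U : OULetter
deriving DecidableEq

open OULetter

/-- The sign `ε` of the letter `X` at the (1-indexed) position `i`:
`+1` if (`X = O` and `i` is even) or (`X = U` and `i` is odd), and `-1` otherwise. -/
def eps (X : OULetter) (i : ℕ) : ℤ :=
  match X with
  | O => if i % 2 = 0 then 1 else -1
  | U => if i % 2 = 1 then 1 else -1

/-- The sign sum `Σ_{i=1}^m ε(X_i)` of a sequence `S = X₁X₂…X_m`. -/
def signSum (S : List OULetter) : ℤ :=
  ∑ j : Fin S.length, eps (S.get j) (j.1 + 1)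

/-- The OU number `Φ(S) = (1/2)·Σ_{i=1}^m ε(X_i)` of a sequence `S`. -/
def Phi (S : List OULetter) : ℚ := (signSum S : ℚ) / 2


/-- The letter different from the given one. -/
def otherLetter : OULetter → OULetter
  | O => U
  | U => O

/-- The alternating sequence of length n starting with the letter X. -/
def alt (X : OULetter) : ℕ → List OULetter
  | 0 => []
  | n + 1 => X :: alt (otherLetter X) n

/-- Sign sum with a position offset `k`. -/
def ssum : List OULetter → ℕ → ℤ
  | [], _ => 0
  | x :: xs, k => eps x (k + 1) + ssum xs (k + 1)

lemma eps_add_two (X : OULetter) (i : ℕ) : eps X (i + 2) = eps X i := by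
  cases X <;> simp [eps, Nat.add_mod_right]

lemma eps_succ (X : OULetter) (i : ℕ) : eps X (i + 1) = - eps X i := by
  rcases Nat.even_or_odd i with ⟨m, hm⟩ | ⟨m, hm⟩ <;> subst hm <;>
    cases X <;> simp [eps, Nat.mul_mod_right] <;> omega

lemma eps_other (X : OULetter) (i : ℕ) : eps (otherLetter X) i = - eps X i := by
  cases X <;> rcases Nat.even_or_odd i with ⟨m, hm⟩ | ⟨m, hm⟩ <;> subst hm <;>
    simp [eps, otherLetter] <;> omega

lemma ssum_aux (S : List OULetter) : ∀ k,
    (∑ j : Fin S.length, eps (S.get j) (k + j.1 + 1)) = ssum S k := by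
  induction S with
  | nil => intro k; simp [ssum]
  | cons x xs ih =>
      intro k
      show (∑ j : Fin (xs.length + 1), eps ((x :: xs).get j) (k + j.1 + 1)) = _
      rw [Fin.sum_univ_succ]
      have : (∑ j : Fin xs.length, eps (xs.get j) (k + (j.1 + 1) + 1))
          = ∑ j : Fin xs.length, eps (xs.get j) ((k + 1) + j.1 + 1) := by
        apply Finset.sum_congr rfl; intro j _; congr 1; omega
      simp only [ssum]
      rw [← ih (k + 1), ← this]
      congr 1

lemma signSum_eq_ssum (S : List OULetter) : signSum S = ssum S 0 := by
  rw [← ssum_aux S 0]; unfold signSum; apply Finset.sum_congr rfl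
  intro j _; congr 1; omega

lemma ssum_append (A B : List OULetter) : ∀ k,
    ssum (A ++ B) k = ssum A k + ssum B (k + A.length) := by
  induction A with
  | nil => intro k; simp [ssum]
  | cons x xs ih =>
      intro k
      show eps x (k + 1) + ssum (xs ++ B) (k + 1)
          = (eps x (k + 1) + ssum xs (k + 1)) + ssum B (k + (xs.length + 1))
      rw [ih (k + 1), show k + (xs.length + 1) = (k + 1) + xs.length by omega]
      ring

lemma ssum_add_two (S : List OULetter) : ∀ k, ssum S (k + 2) = ssum S k := by
  induction S with
  | nil => intro k; simp [ssum]
  | cons x xs ih =>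
      intro k
      simp only [ssum]
      rw [show k + 2 + 1 = (k + 1) + 2 from rfl, eps_add_two, ih (k + 1)]

lemma ssum_replicate (X : OULetter) : ∀ m k,
    ssum (List.replicate m X) k = if m % 2 = 0 then 0 else eps X (k + 1) := by
  intro m
  induction m using Nat.strong_induction_on with
  | _ m ih =>
    match m with
    | 0 => intro k; simp [ssum]
    | 1 => intro k; simp [List.replicate, ssum]
    | m + 2 =>
        intro k
        rw [show List.replicate (m + 2) X = X :: X :: List.replicate m X by
          simp [List.replicate]]
        simp only [ssum]
        rw [show k + 1 + 1 = (k + 1) + 1 from rfl, eps_succ X (k + 1)]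
        rw [show (k + 1 + 1) = k + 2 from rfl, ssum_add_two]
        rw [ih m (by omega) k]
        have : (m + 2) % 2 = m % 2 := by omega
        rw [this]; ring

lemma ssum_alt (X : OULetter) : ∀ n k, ssum (alt X n) k = n * eps X (k + 1) := by
  intro n
  induction n using Nat.strong_induction_on with
  | _ n ih =>
    match n with
    | 0 => intro k; simp [alt, ssum]
    | 1 => intro k; simp [alt, ssum]
    | n + 2 =>
        intro k
        rw [show alt X (n + 2) = X :: otherLetter X :: alt X n by
          simp [alt, otherLetter]; cases X <;> rfl]
        simp only [ssum]
        rw [show k + 1 + 1 = k + 2 from rfl, ssum_add_two, ih n (by omega) k,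
          eps_other, show k + 2 = (k + 1) + 1 from rfl, eps_succ X (k + 1)]
        push_cast
        ring

lemma alt_length (X : OULetter) : ∀ n, (alt X n).length = n := by
  intro n
  induction n generalizing X with
  | zero => rfl
  | succ n ih => simp [alt, ih]

lemma signSum_blocks (a b n : ℕ) (X : OULetter) :
    signSum (List.replicate a U ++ alt X n ++ List.replicate b O)
      = (if a % 2 = 0 then 0 else eps U 1) + n * eps X (a + 1)
        + (if b % 2 = 0 then 0 else eps O (a + n + 1)) := by
  rw [signSum_eq_ssum, ssum_append, ssum_append, ssum_replicate, ssum_replicate, ssum_alt]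
  simp [alt_length, add_assoc]

lemma eps_U_of_odd (i : ℕ) (h : i % 2 = 1) : eps U i = 1 := by simp [eps, h]
lemma eps_U_of_even (i : ℕ) (h : i % 2 = 0) : eps U i = -1 := by simp [eps, h]
lemma eps_O_of_even (i : ℕ) (h : i % 2 = 0) : eps O i = 1 := by simp [eps, h]
lemma eps_O_of_odd (i : ℕ) (h : i % 2 = 1) : eps O i = -1 := by simp [eps, h]

/-- For the Hayashi-Hayashi-Nowik diagram D_n with n ≥ 4 odd: the cyclic OU numbers of
the non-self OU sequences of the two components, according to n mod 4. -/
theorem phi_hhn_odd (n : ℕ) (hn : 4 ≤ n) (hodd : Odd n) :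
    (n % 4 = 1 →
        |Phi (List.replicate ((n + 1) / 2) U ++ alt U n ++
              List.replicate ((n - 1) / 2) O)| = (((n - 1) / 2 : ℕ) : ℚ) ∧
          |Phi (List.replicate ((n - 1) / 2) U ++ alt O n ++
              List.replicate ((n + 1) / 2) O)| = (((n - 1) / 2 : ℕ) : ℚ)) ∧
      (n % 4 = 3 →
        |Phi (List.replicate ((n + 1) / 2) U ++ alt U n ++
              List.replicate ((n - 1) / 2) O)| = (((n + 1) / 2 : ℕ) : ℚ) ∧
          |Phi (List.replicate ((n - 1) / 2) U ++ alt O n ++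
              List.replicate ((n + 1) / 2) O)| = (((n + 1) / 2 : ℕ) : ℚ)) := by
  constructor
  · rintro h1
    obtain ⟨k, rfl⟩ : ∃ k, n = 4 * k + 1 := ⟨n / 4, by omega⟩
    have ha : (4 * k + 1 + 1) / 2 = 2 * k + 1 := by omega
    have hb : (4 * k + 1 - 1) / 2 = 2 * k := by omega
    rw [ha, hb]
    constructor
    · have hs : signSum (List.replicate (2 * k + 1) U ++ alt U (4 * k + 1) ++
          List.replicate (2 * k) O) = -(4 * k) := by
        rw [signSum_blocks, if_neg (by omega), if_pos (by omega),
          eps_U_of_odd 1 (by omega), eps_U_of_even (2 * k + 1 + 1) (by omega)]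
        push_cast; ring
      have : Phi (List.replicate (2 * k + 1) U ++ alt U (4 * k + 1) ++
          List.replicate (2 * k) O) = -(2 * k : ℚ) := by
        rw [Phi, hs]; push_cast; ring
      rw [this, abs_neg, abs_of_nonneg (by positivity)]; push_cast; ring
    · have hs : signSum (List.replicate (2 * k) U ++ alt O (4 * k + 1) ++
          List.replicate (2 * k + 1) O) = -(4 * k) := by
        rw [signSum_blocks, if_pos (by omega), if_neg (by omega),
          eps_O_of_odd (2 * k + 1) (by omega),
          eps_O_of_even (2 * k + (4 * k + 1) + 1) (by omega)]
        push_cast; ring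
      have : Phi (List.replicate (2 * k) U ++ alt O (4 * k + 1) ++
          List.replicate (2 * k + 1) O) = -(2 * k : ℚ) := by
        rw [Phi, hs]; push_cast; ring
      rw [this, abs_neg, abs_of_nonneg (by positivity)]; push_cast; ring
  · rintro h3
    obtain ⟨k, rfl⟩ : ∃ k, n = 4 * k + 3 := ⟨n / 4, by omega⟩
    have ha : (4 * k + 3 + 1) / 2 = 2 * k + 2 := by omega
    have hb : (4 * k + 3 - 1) / 2 = 2 * k + 1 := by omega
    rw [ha, hb]
    constructor
    · have hs : signSum (List.replicate (2 * k + 2) U ++ alt U (4 * k + 3) ++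
          List.replicate (2 * k + 1) O) = 4 * k + 4 := by
        rw [signSum_blocks, if_pos (by omega), if_neg (by omega),
          eps_U_of_odd (2 * k + 2 + 1) (by omega),
          eps_O_of_even (2 * k + 2 + (4 * k + 3) + 1) (by omega)]
        push_cast; ring
      have : Phi (List.replicate (2 * k + 2) U ++ alt U (4 * k + 3) ++
          List.replicate (2 * k + 1) O) = (2 * k + 2 : ℚ) := by
        rw [Phi, hs]; push_cast; ring
      rw [this, abs_of_nonneg (by positivity)]; push_cast; ring
    · have hs : signSum (List.replicate (2 * k + 1) U ++ alt O (4 * k + 3) ++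
          List.replicate (2 * k + 2) O) = 4 * k + 4 := by
        rw [signSum_blocks, if_neg (by omega), if_pos (by omega),
          eps_U_of_odd 1 (by omega), eps_O_of_even (2 * k + 1 + 1) (by omega)]
        push_cast; ring
      have : Phi (List.replicate (2 * k + 1) U ++ alt O (4 * k + 3) ++
          List.replicate (2 * k + 2) O) = (2 * k + 2 : ℚ) := by
        rw [Phi, hs]; push_cast; ring
      rw [this, abs_of_nonneg (by positivity)]; push_cast; ring
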